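/- Assume Σ is reachable from a state x*, i.e., every state can be reached from x* by a trajectory. Then Σ admits a nonnegative storage function if and only if F_a(x*) < ∞, where F_a(x) := sup{−supply : trajectories of Σ on some [0,T], T ≥ 0, with x(0) = x}. -/

import Mathlib

open MeasureTheory

/-- A trajectory of the control system `ẋ = f(x,u)` with supply rate `s`,
on an interval `[t₁, t₂]`. -/
structure Traj {n m : ℕ} (f : (Fin n → ℝ) → (Fin m → ℝ) → (Fin n → ℝ))
    (s : (Fin n → ℝ) → (Fin m → ℝ) → ℝ) where
  t₁ : ℝ
  t₂ : ℝ
  hle : t₁ ≤ t₂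
  x : ℝ → Fin n → ℝ
  u : ℝ → Fin m → ℝ
  hu : Measurable u
  hx : Continuous x
  hf : IntervalIntegrable (fun t => f (x t) (u t)) volume t₁ t₂
  hs : IntervalIntegrable (fun t => s (x t) (u t)) volume t₁ t₂
  hdyn : ∀ t ∈ Set.Icc t₁ t₂, x t = x t₁ + ∫ τ in t₁..t, f (x τ) (u τ)

/-- The supply of a trajectory. -/
noncomputable def Traj.supply {n m : ℕ} {f : (Fin n → ℝ) → (Fin m → ℝ) → (Fin n → ℝ)}
    {s : (Fin n → ℝ) → (Fin m → ℝ) → ℝ} (T : Traj f s) : ℝ :=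
  ∫ t in T.t₁..T.t₂, s (T.x t) (T.u t)

/-- `F` is a storage function: the dissipation inequality holds along all trajectories. -/
def IsStorage {n m : ℕ} (f : (Fin n → ℝ) → (Fin m → ℝ) → (Fin n → ℝ))
    (s : (Fin n → ℝ) → (Fin m → ℝ) → ℝ) (F : (Fin n → ℝ) → ℝ) : Prop :=
  ∀ T : Traj f s, F (T.x T.t₂) - F (T.x T.t₁) ≤ T.supply

/-- Cyclo-dissipativity with respect to the ground state `xs`: nonnegative supply along
every trajectory beginning and ending at `xs`. -/
def CycloDissipativeWrt {n m : ℕ} (f : (Fin n → ℝ) → (Fin m → ℝ) → (Fin n → ℝ))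
    (s : (Fin n → ℝ) → (Fin m → ℝ) → ℝ) (xs : Fin n → ℝ) : Prop :=
  ∀ T : Traj f s, T.x T.t₁ = xs → T.x T.t₂ = xs → 0 ≤ T.supply

/-- The set of values `-supply` over trajectories from `x` to `xs`. -/
def Sac {n m : ℕ} (f : (Fin n → ℝ) → (Fin m → ℝ) → (Fin n → ℝ))
    (s : (Fin n → ℝ) → (Fin m → ℝ) → ℝ) (xs x : Fin n → ℝ) : Set ℝ :=
  {r : ℝ | ∃ T : Traj f s, T.x T.t₁ = x ∧ T.x T.t₂ = xs ∧ r = -T.supply}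

/-- The set of values `supply` over trajectories from `xs` to `x`. -/
def Src {n m : ℕ} (f : (Fin n → ℝ) → (Fin m → ℝ) → (Fin n → ℝ))
    (s : (Fin n → ℝ) → (Fin m → ℝ) → ℝ) (xs x : Fin n → ℝ) : Set ℝ :=
  {r : ℝ | ∃ T : Traj f s, T.x T.t₁ = xs ∧ T.x T.t₂ = x ∧ r = T.supply}

/-- The set of values `-supply` over trajectories on some interval `[0, T]` starting at `x`,
whose supremum is the available storage `F_a(x)`. -/
def Sa {n m : ℕ} (f : (Fin n → ℝ) → (Fin m → ℝ) → (Fin n → ℝ))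
    (s : (Fin n → ℝ) → (Fin m → ℝ) → ℝ) (x : Fin n → ℝ) : Set ℝ :=
  {r : ℝ | ∃ T : Traj f s, T.t₁ = 0 ∧ T.x 0 = x ∧ r = -T.supply}

/-! Any nonnegative storage function `F` bounds `-supply` along trajectories from `x` by `F x`,
so `F_a(x*) ≤ F(x*)`. Conversely, prepending a trajectory from `x*` to `x` shows
`F_a(x) ≤ F_a(x*) + supply < ∞` for every `x`, and concatenating trajectories shows that `F_a`
is itself a storage function; it is nonnegative because the constant trajectory on `[0, 0]`
has supply `0`. -/

section Glue

variable {E : Type*} [NormedAddCommGroup E] {g₁ g₂ : ℝ → E} {a b c : ℝ}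

theorem IntervalIntegrable.ite_le (hab : a ≤ b) (hbc : b ≤ c)
    (h₁ : IntervalIntegrable g₁ volume a b) (h₂ : IntervalIntegrable g₂ volume b c) :
    IntervalIntegrable (fun t => if t ≤ b then g₁ t else g₂ t) volume a c := by
  refine (h₁.congr fun t ht => ?_).trans (h₂.congr fun t ht => ?_)
  · rw [Set.uIoc_of_le hab] at ht
    simp [ht.2]
  · rw [Set.uIoc_of_le hbc] at ht
    simp [not_le.2 ht.1]

theorem intervalIntegral.integral_ite_le [NormedSpace ℝ E] (hab : a ≤ b) (hbc : b ≤ c)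
    (h₁ : IntervalIntegrable g₁ volume a b) (h₂ : IntervalIntegrable g₂ volume b c) :
    ∫ t in a..c, (if t ≤ b then g₁ t else g₂ t) = (∫ t in a..b, g₁ t) + ∫ t in b..c, g₂ t := by
  rw [← integral_add_adjacent_intervals (IntervalIntegrable.ite_le hab le_rfl h₁ .refl)
    (IntervalIntegrable.ite_le le_rfl hbc .refl h₂)]
  congr 1
  · refine integral_congr fun t ht => ?_
    rw [Set.uIcc_of_le hab] at ht
    simp [ht.2]
  · refine integral_congr_ae (.of_forall fun t ht => ?_)
    rw [Set.uIoc_of_le hbc] at ht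
    simp [not_le.2 ht.1]

end Glue

namespace Traj

variable {n m : ℕ} {f : (Fin n → ℝ) → (Fin m → ℝ) → (Fin n → ℝ)}
  {s : (Fin n → ℝ) → (Fin m → ℝ) → ℝ}

def const (x₀ : Fin n → ℝ) : Traj f s where
  t₁ := 0
  t₂ := 0
  hle := le_rfl
  x := fun _ => x₀
  u := fun _ => 0
  hu := measurable_const
  hx := continuous_const
  hf := intervalIntegrable_const
  hs := intervalIntegrable_const
  hdyn t ht := by
    obtain rfl : t = 0 := le_antisymm ht.2 ht.1
    simp

@[simp]
theorem supply_const (x₀ : Fin n → ℝ) : (const x₀ : Traj f s).supply = 0 := by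
  simp [supply, const]

def shift (T : Traj f s) (c : ℝ) : Traj f s where
  t₁ := T.t₁ + c
  t₂ := T.t₂ + c
  hle := by linarith [T.hle]
  x t := T.x (t - c)
  u t := T.u (t - c)
  hu := T.hu.comp (measurable_id.sub_const c)
  hx := T.hx.comp (continuous_id.sub continuous_const)
  hf := T.hf.comp_sub_right c
  hs := T.hs.comp_sub_right c
  hdyn t ht := by
    simp only [intervalIntegral.integral_comp_sub_right (fun τ => f (T.x τ) (T.u τ)),
      add_sub_cancel_right]
    exact T.hdyn (t - c) ⟨by linarith [ht.1], by linarith [ht.2]⟩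

@[simp]
theorem supply_shift (T : Traj f s) (c : ℝ) : (T.shift c).supply = T.supply := by
  simp only [supply, shift, intervalIntegral.integral_comp_sub_right (fun t => s (T.x t) (T.u t)),
    add_sub_cancel_right]

section Append

variable (T T' : Traj f s)

theorem intervalIntegrable_comp_ite {E : Type*} [NormedAddCommGroup E]
    {φ : (Fin n → ℝ) → (Fin m → ℝ) → E} (ht : T.t₂ = T'.t₁)
    (h : IntervalIntegrable (fun t => φ (T.x t) (T.u t)) volume T.t₁ T.t₂)
    (h' : IntervalIntegrable (fun t => φ (T'.x t) (T'.u t)) volume T'.t₁ T'.t₂) :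
    IntervalIntegrable (fun t => φ (if t ≤ T.t₂ then T.x t else T'.x t)
      (if t ≤ T.t₂ then T.u t else T'.u t)) volume T.t₁ T'.t₂ := by
  simp only [apply_ite₂ φ]
  exact .ite_le T.hle (ht ▸ T'.hle) h (ht ▸ h')

noncomputable def append (ht : T.t₂ = T'.t₁) (hx : T.x T.t₂ = T'.x T'.t₁) : Traj f s where
  t₁ := T.t₁
  t₂ := T'.t₂
  hle := T.hle.trans (ht ▸ T'.hle)
  x t := if t ≤ T.t₂ then T.x t else T'.x t
  u t := if t ≤ T.t₂ then T.u t else T'.u t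
  hu := T.hu.ite measurableSet_Iic T'.hu
  hx := T.hx.if_le T'.hx continuous_id continuous_const fun t h => h ▸ ht ▸ hx
  hf := intervalIntegrable_comp_ite T T' ht T.hf T'.hf
  hs := intervalIntegrable_comp_ite T T' ht T.hs T'.hs
  hdyn t ht' := by
    simp only [apply_ite₂ f, if_pos T.hle]
    by_cases htb : t ≤ T.t₂
    · rw [if_pos htb, T.hdyn t ⟨ht'.1, htb⟩]
      refine congrArg _ (intervalIntegral.integral_congr fun τ hτ => ?_)
      rw [Set.uIcc_of_le ht'.1] at hτ
      simp [hτ.2.trans htb]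
    · have hbt : T.t₂ ≤ t := (not_le.1 htb).le
      rw [if_neg htb, intervalIntegral.integral_ite_le T.hle hbt T.hf
          (T'.hf.mono_set (by
            rw [Set.uIcc_of_le hbt, Set.uIcc_of_le T'.hle, ht]
            exact Set.Icc_subset_Icc le_rfl ht'.2)),
        T'.hdyn t ⟨ht ▸ hbt, ht'.2⟩, ← hx, T.hdyn T.t₂ ⟨T.hle, le_rfl⟩, ht, add_assoc]

@[simp]
theorem supply_append (ht : T.t₂ = T'.t₁) (hx : T.x T.t₂ = T'.x T'.t₁) :
    (T.append T' ht hx).supply = T.supply + T'.supply := by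
  simp only [supply, append, apply_ite₂ s]
  rw [intervalIntegral.integral_ite_le T.hle (ht ▸ T'.hle) T.hs (ht ▸ T'.hs), ht]

theorem x_t₁_append (ht : T.t₂ = T'.t₁) (hx : T.x T.t₂ = T'.x T'.t₁) :
    (T.append T' ht hx).x T.t₁ = T.x T.t₁ :=
  if_pos T.hle

end Append

end Traj

variable {n m : ℕ} {f : (Fin n → ℝ) → (Fin m → ℝ) → (Fin n → ℝ)}
  {s : (Fin n → ℝ) → (Fin m → ℝ) → ℝ}

theorem zero_mem_Sa (x : Fin n → ℝ) : 0 ∈ Sa f s x :=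
  ⟨.const x, rfl, rfl, by simp⟩

theorem neg_supply_sub_supply_mem_Sa (T T' : Traj f s) (h₀ : T'.t₁ = 0)
    (hx : T'.x 0 = T.x T.t₂) : -T.supply - T'.supply ∈ Sa f s (T.x T.t₁) := by
  have ht : T.t₂ = (T'.shift T.t₂).t₁ := by simp [Traj.shift, h₀]
  have hx' : T.x T.t₂ = (T'.shift T.t₂).x (T'.shift T.t₂).t₁ := by simp [Traj.shift, h₀, hx]
  refine ⟨(T.append _ ht hx').shift (-T.t₁), by simp [Traj.shift, Traj.append], ?_, by simp; ring⟩
  simpa [Traj.shift] using Traj.x_t₁_append T _ ht hx'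

theorem mem_upperBounds_Sa_of_isStorage {F : (Fin n → ℝ) → ℝ} (hF₀ : ∀ x, 0 ≤ F x)
    (hF : IsStorage f s F) (x : Fin n → ℝ) : F x ∈ upperBounds (Sa f s x) := by
  rintro _ ⟨T, h₀, hx, rfl⟩
  have := hF T
  rw [h₀, hx] at this
  linarith [hF₀ (T.x T.t₂)]

theorem bddAbove_Sa_of_traj (T : Traj f s) (h : BddAbove (Sa f s (T.x T.t₁))) :
    BddAbove (Sa f s (T.x T.t₂)) := by
  obtain ⟨M, hM⟩ := h
  refine ⟨M + T.supply, ?_⟩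
  rintro _ ⟨T', h₀, hx, rfl⟩
  linarith [hM (neg_supply_sub_supply_mem_Sa T T' h₀ hx)]

theorem isStorage_sSup_Sa (h : ∀ x, BddAbove (Sa f s x)) :
    IsStorage f s fun x => sSup (Sa f s x) := by
  intro T
  rw [sub_le_iff_le_add]
  refine csSup_le ⟨0, zero_mem_Sa _⟩ ?_
  rintro _ ⟨T', h₀, hx, rfl⟩
  linarith [le_csSup (h _) (neg_supply_sub_supply_mem_Sa T T' h₀ hx)]

theorem nonneg_storage_iff_available_storage_finite_at_ground_general {n m : ℕ}
    (f : (Fin n → ℝ) → (Fin m → ℝ) → (Fin n → ℝ))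
    (s : (Fin n → ℝ) → (Fin m → ℝ) → ℝ)
    (xs : Fin n → ℝ)
    (hreach : ∀ x : Fin n → ℝ, ∃ T : Traj f s, T.x T.t₁ = xs ∧ T.x T.t₂ = x) :
    (∃ F : (Fin n → ℝ) → ℝ, (∀ x, 0 ≤ F x) ∧ IsStorage f s F) ↔
      BddAbove (Sa f s xs) := by
  constructor
  · rintro ⟨F, hF₀, hF⟩
    exact ⟨F xs, mem_upperBounds_Sa_of_isStorage hF₀ hF xs⟩
  · intro hB
    have hbdd (x : Fin n → ℝ) : BddAbove (Sa f s x) := by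
      obtain ⟨T, rfl, rfl⟩ := hreach x
      exact bddAbove_Sa_of_traj T hB
    exact ⟨fun x => sSup (Sa f s x), fun x => le_csSup (hbdd x) (zero_mem_Sa x),
      isStorage_sSup_Sa hbdd⟩

/-- If the system is reachable from a state `xs`, then it admits a nonnegative storage
function if and only if the available storage `F_a(xs)` is finite, i.e. the set `Sa xs`
is bounded above. -/
theorem nonneg_storage_iff_available_storage_finite_at_ground {n m : ℕ}
    (f : (Fin n → ℝ) → (Fin m → ℝ) → (Fin n → ℝ))
    (s : (Fin n → ℝ) → (Fin m → ℝ) → ℝ)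
    (hfc : Continuous fun q : (Fin n → ℝ) × (Fin m → ℝ) => f q.1 q.2)
    (hsc : Continuous fun q : (Fin n → ℝ) × (Fin m → ℝ) => s q.1 q.2)
    (xs : Fin n → ℝ)
    (hreach : ∀ x : Fin n → ℝ, ∃ T : Traj f s, T.x T.t₁ = xs ∧ T.x T.t₂ = x) :
    (∃ F : (Fin n → ℝ) → ℝ, (∀ x, 0 ≤ F x) ∧ IsStorage f s F) ↔
      BddAbove (Sa f s xs) :=
  nonneg_storage_iff_available_storage_finite_at_ground_general f s xs hreach
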